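/- Secant lemma: Let κ be a conic, P a point on κ, and t the tangent to κ at P. If l is a line passing through P and l ≠ t, then l passes through a second point R of κ with R ≠ P; thus l is a secant of κ. -/

import Mathlib

open Configuration

universe u
variable (P L : Type u) [Membership P L]

/-- Three points are collinear if some line passes through all three. -/
def Col (A B C : P) : Prop := ∃ l : L, A ∈ l ∧ B ∈ l ∧ C ∈ l

/-- Every line of `L` is incident with at least `n` distinct points. -/
def LinesHaveAtLeast (n : ℕ) : Prop :=
  ∀ l : L, ∃ s : Finset P, n ≤ s.card ∧ ∀ X ∈ s, X ∈ l

/-- An object of the plane: the range of a line or the pencil of a point. -/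
inductive Obj (P L : Type u) where
  | range : L → Obj P L
  | pencil : P → Obj P L

/-- The carrier of an object: the points on the line, resp. the lines through
the point. -/
abbrev Obj.Carrier {P L : Type u} [Membership P L] : Obj P L → Type u
  | .range l => {X : P // X ∈ l}
  | .pencil U => {k : L // U ∈ k}

/-- `f` is the perspectivity from the range of `l` to the range of `m` with
center `O`, a point outside both `l` and `m` : each point `X` of `l` is mapped
to the point `(OX)·m`, i.e. `O`, `X` and `f X` are collinear. -/
def IsRangePersp (l m : L) (f : {X : P // X ∈ l} → {Y : P // Y ∈ m}) : Prop :=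
  ∃ O : P, O ∉ l ∧ O ∉ m ∧
    ∀ X : {X : P // X ∈ l}, ∃ k : L, O ∈ k ∧ (X : P) ∈ k ∧ ((f X : P)) ∈ k

/-- `f` is the elementary map from the pencil of `U` to the range of a line `l`
not through `U` : each line `k` through `U` is sent to the point `k·l`. -/
def IsElemMap (U : P) (l : L) (f : {k : L // U ∈ k} → {X : P // X ∈ l}) : Prop :=
  U ∉ l ∧ ∀ k : {k : L // U ∈ k}, ((f k : P)) ∈ (k : L)

/-- `f` is the elementary map from the range of a line `l` to the pencil of a
point `U` outside `l` : each point `X` of `l` is sent to the line `UX`. -/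
def IsElemInv (U : P) (l : L) (f : {X : P // X ∈ l} → {k : L // U ∈ k}) : Prop :=
  U ∉ l ∧ ∀ X : {X : P // X ∈ l}, (X : P) ∈ ((f X : L))

/-- A projectivity (between ranges or pencils) : a composite of finitely many
perspectivities and elementary maps. -/
inductive IsProj : (a b : Obj P L) → (a.Carrier → b.Carrier) → Prop where
  | persp {l m : L} {f : {X : P // X ∈ l} → {Y : P // Y ∈ m}} :
      IsRangePersp P L l m f → IsProj (.range l) (.range m) f
  | elem {U : P} {l : L} {f : {k : L // U ∈ k} → {X : P // X ∈ l}} :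
      IsElemMap P L U l f → IsProj (.pencil U) (.range l) f
  | elemInv {U : P} {l : L} {f : {X : P // X ∈ l} → {k : L // U ∈ k}} :
      IsElemInv P L U l f → IsProj (.range l) (.pencil U) f
  | comp {a b c : Obj P L} {f : a.Carrier → b.Carrier} {g : b.Carrier → c.Carrier} :
      IsProj a b f → IsProj b c g → IsProj a c (g ∘ f)

/-- Axiom T: every projectivity of a range or a pencil onto itself having three
distinct fixed elements is the identity. -/
def AxiomT : Prop :=
  ∀ (a : Obj P L) (f : a.Carrier → a.Carrier), IsProj P L a a f →
    (∃ x y z : a.Carrier, x ≠ y ∧ x ≠ z ∧ y ≠ z ∧ f x = x ∧ f y = y ∧ f z = z) →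
    ∀ w, f w = w

/-- The Steiner conic `κ(π;U,V)` defined by a projectivity `π : U* → V*` :
the locus of points `l·π(l)` for `l` a line through `U`. -/
def conicSet (U V : P) (π : {k : L // U ∈ k} → {k : L // V ∈ k}) : Set P :=
  {X : P | ∃ k : {k : L // U ∈ k}, X ∈ (k : L) ∧ X ∈ ((π k : L))}

/-- A conic: the Steiner conic of some nonperspective projectivity between the
pencils of two distinct points. -/
def IsConic (κ : Set P) : Prop :=
  ∃ (U V : P) (π : {k : L // U ∈ k} → {k : L // V ∈ k}),
    U ≠ V ∧ IsProj P L (.pencil U) (.pencil V) π ∧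
    (∀ k : {k : L // U ∈ k}, ((π k : L)) ≠ (k : L)) ∧
    κ = conicSet P L U V π

/-- A line `t` is tangent to `κ` at `Q` if `Q` is on `κ` and on `t`, and is the
only point of `κ` incident with `t`. -/
def IsTangent (κ : Set P) (t : L) (Q : P) : Prop :=
  Q ∈ κ ∧ Q ∈ t ∧ ∀ X ∈ κ, X ∈ t → X = Q

/-- A line is a secant of `κ` if it passes through two distinct points of `κ`. -/
def IsSecant (κ : Set P) (s : L) : Prop :=
  ∃ X Y : P, X ≠ Y ∧ X ∈ κ ∧ Y ∈ κ ∧ X ∈ s ∧ Y ∈ s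

/-- Axiom P: the tangents to a conic at any three distinct points of the conic
are nonconcurrent. -/
def AxiomP : Prop :=
  ∀ κ : Set P, IsConic P L κ →
    ∀ X Y Z : P, X ∈ κ → Y ∈ κ → Z ∈ κ → X ≠ Y → X ≠ Z → Y ≠ Z →
      ∀ tx ty tz : L, IsTangent P L κ tx X → IsTangent P L κ ty Y → IsTangent P L κ tz Z →
        ¬ ∃ W : P, W ∈ tx ∧ W ∈ ty ∧ W ∈ tz

/-!
It suffices to show that a conic `κ(π;U,V)` has a single tangent at each of its points `Q`.
At `Q = U` a tangent `g` must satisfy `π(g) = UV`, so it is unique since `π` is injective;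
`Q = V` is the same case for `π⁻¹`, which defines the same conic. Otherwise, for a line `g`
through `Q` missing `U` and `V`, the projectivity `ψ_g : k ↦ U(π(k)·g)` of the pencil `U*` fixes
exactly the lines `UX` with `X ∈ κ ∩ g`. If `t ≠ l` were both tangent at `Q`, then `ψ_t` and `ψ_l`
would be parabolic with the same fixed line `UQ`, and both send `π⁻¹(UV)` to `UV`. By Axiom T,
two parabolic projectivities with the same fixed element that agree at one further element
coincide (on a range `t`, each factors as `(s → t, centre O') ∘ (t → s, centre O)` with `O'` on
the line joining `O` to the fixed point). But `ψ_t` and `ψ_l` differ at `π⁻¹(m)` for any line `m`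
through `V` missing `U` and `Q`.
-/

open Function

section Incidence

variable {P L} [ProjectivePlane P L]

noncomputable def join {A B : P} (h : A ≠ B) : L := HasLines.mkLine h

theorem mem_join_left {A B : P} (h : A ≠ B) : A ∈ (join h : L) := (HasLines.mkLine_ax h).1

theorem mem_join_right {A B : P} (h : A ≠ B) : B ∈ (join h : L) := (HasLines.mkLine_ax h).2

noncomputable def meet {l m : L} (h : l ≠ m) : P := HasPoints.mkPoint h

theorem meet_mem_left {l m : L} (h : l ≠ m) : (meet h : P) ∈ l := (HasPoints.mkPoint_ax h).1

theorem meet_mem_right {l m : L} (h : l ≠ m) : (meet h : P) ∈ m := (HasPoints.mkPoint_ax h).2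

theorem point_eq_of_mem {l m : L} (h : l ≠ m) {X Y : P}
    (hXl : X ∈ l) (hXm : X ∈ m) (hYl : Y ∈ l) (hYm : Y ∈ m) : X = Y :=
  (Nondegenerate.eq_or_eq hXl hYl hXm hYm).resolve_right h

theorem line_eq_of_mem {A B : P} (h : A ≠ B) {l m : L}
    (hAl : A ∈ l) (hBl : B ∈ l) (hAm : A ∈ m) (hBm : B ∈ m) : l = m :=
  (Nondegenerate.eq_or_eq hAl hBl hAm hBm).resolve_left h

end Incidence

section PointsOnLines

variable {P L}

theorem LinesHaveAtLeast.mono {m n : ℕ} (hmn : m ≤ n) (h : LinesHaveAtLeast P L n) :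
    LinesHaveAtLeast P L m :=
  fun l => (h l).imp fun _ hs => ⟨hmn.trans hs.1, hs.2⟩

theorem LinesHaveAtLeast.exists_mem_ne_ne (h3 : LinesHaveAtLeast P L 3) (l : L) (A B : P) :
    ∃ X, X ∈ l ∧ X ≠ A ∧ X ≠ B := by
  classical
  obtain ⟨s, hs, hsl⟩ := h3 l
  have hAB : ({A, B} : Finset P).card < s.card := (Finset.card_le_two).trans_lt hs
  obtain ⟨X, hXs, hXAB⟩ := Finset.exists_mem_notMem_of_card_lt_card hAB
  simp only [Finset.mem_insert, Finset.mem_singleton, not_or] at hXAB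
  exact ⟨X, hsl X hXs, hXAB⟩

variable [ProjectivePlane P L]

theorem LinesHaveAtLeast.exists_notMem_notMem (h3 : LinesHaveAtLeast P L 3) {s t : L} {a : P}
    (has : a ∈ s) (hat : a ∈ t) : ∃ O, O ∉ s ∧ O ∉ t := by
  obtain ⟨w, haw⟩ := Nondegenerate.exists_line (L := L) a
  have hws : w ≠ s := (ne_of_mem_of_not_mem' has haw).symm
  have hwt : w ≠ t := (ne_of_mem_of_not_mem' hat haw).symm
  obtain ⟨O, hOw, hOs, hOt⟩ := h3.exists_mem_ne_ne w (meet hws) (meet hwt)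
  exact ⟨O, fun h => hOs (point_eq_of_mem hws hOw h (meet_mem_left _) (meet_mem_right _)),
    fun h => hOt (point_eq_of_mem hwt hOw h (meet_mem_left _) (meet_mem_right _))⟩

theorem LinesHaveAtLeast.exists_line_notMem_notMem (h3 : LinesHaveAtLeast P L 3) {V A B : P}
    (hA : V ≠ A) (hB : V ≠ B) : ∃ m : L, V ∈ m ∧ A ∉ m ∧ B ∉ m := by
  obtain ⟨w, hVw⟩ := Nondegenerate.exists_line (L := L) V
  have hAw : (join hA : L) ≠ w := ne_of_mem_of_not_mem' (mem_join_left hA) hVw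
  have hBw : (join hB : L) ≠ w := ne_of_mem_of_not_mem' (mem_join_left hB) hVw
  obtain ⟨X, hXw, hXA, hXB⟩ := h3.exists_mem_ne_ne w (meet hAw) (meet hBw)
  have hVX : V ≠ X := (ne_of_mem_of_not_mem hXw hVw).symm
  have avoid : ∀ {C : P} (hC : V ≠ C) (hCw : (join hC : L) ≠ w), X ≠ meet hCw →
      C ∉ (join hVX : L) := by
    intro C hC hCw hXC hCX
    have hline : (join hVX : L) = join hC :=
      line_eq_of_mem hC (mem_join_left _) hCX (mem_join_left _) (mem_join_right _)
    exact hXC (point_eq_of_mem hCw (hline ▸ mem_join_right hVX) hXw (meet_mem_left _)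
      (meet_mem_right _))
  exact ⟨join hVX, mem_join_left hVX, avoid hA hAw hXA, avoid hB hBw hXB⟩

end PointsOnLines

section Projectivities

variable {P L} [ProjectivePlane P L]

noncomputable def elemMap (U : P) (l : L) (h : U ∉ l) : {k : L // U ∈ k} → {X : P // X ∈ l} :=
  fun k => ⟨meet (ne_of_mem_of_not_mem' k.2 h), meet_mem_right _⟩

noncomputable def elemInv (U : P) (l : L) (h : U ∉ l) : {X : P // X ∈ l} → {k : L // U ∈ k} :=
  fun X => ⟨join (ne_of_mem_of_not_mem X.2 h).symm, mem_join_left _⟩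

noncomputable def persp (O : P) (l m : L) (hl : O ∉ l) (hm : O ∉ m) :
    {X : P // X ∈ l} → {Y : P // Y ∈ m} :=
  elemMap O m hm ∘ elemInv O l hl

section Elementary

variable {U : P} {l : L} (h : U ∉ l)

theorem elemMap_mem (k : {k : L // U ∈ k}) : (elemMap U l h k : P) ∈ (k : L) :=
  meet_mem_left _

theorem mem_elemInv (X : {X : P // X ∈ l}) : (X : P) ∈ (elemInv U l h X : L) :=
  mem_join_right _

variable {h}

theorem elemMap_eq_of_mem {k : {k : L // U ∈ k}} {X : {X : P // X ∈ l}} (hX : (X : P) ∈ (k : L)) :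
    elemMap U l h k = X :=
  Subtype.ext <| point_eq_of_mem (ne_of_mem_of_not_mem' k.2 h) (elemMap_mem h k)
    (elemMap U l h k).2 hX X.2

theorem elemInv_eq_of_mem {X : {X : P // X ∈ l}} {k : {k : L // U ∈ k}} (hX : (X : P) ∈ (k : L)) :
    elemInv U l h X = k :=
  Subtype.ext <| line_eq_of_mem (ne_of_mem_of_not_mem X.2 h).symm (elemInv U l h X).2
    (mem_elemInv h X) k.2 hX

variable (h)

theorem elemInv_elemMap : LeftInverse (elemInv U l h) (elemMap U l h) :=
  fun k => elemInv_eq_of_mem (elemMap_mem h k)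

theorem elemMap_elemInv : RightInverse (elemInv U l h) (elemMap U l h) :=
  fun X => elemMap_eq_of_mem (mem_elemInv h X)

theorem isElemMap_elemMap : IsElemMap P L U l (elemMap U l h) := ⟨h, elemMap_mem h⟩

theorem isElemInv_elemInv : IsElemInv P L U l (elemInv U l h) := ⟨h, mem_elemInv h⟩

theorem IsElemMap.eq_elemMap {f : {k : L // U ∈ k} → {X : P // X ∈ l}}
    (hf : IsElemMap P L U l f) : f = elemMap U l hf.1 :=
  funext fun k => (elemMap_eq_of_mem (hf.2 k)).symm

theorem IsElemInv.eq_elemInv {f : {X : P // X ∈ l} → {k : L // U ∈ k}}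
    (hf : IsElemInv P L U l f) : f = elemInv U l hf.1 :=
  funext fun X => (elemInv_eq_of_mem (hf.2 X)).symm

noncomputable def elemEquiv : {k : L // U ∈ k} ≃ {X : P // X ∈ l} :=
  ⟨elemMap U l h, elemInv U l h, elemInv_elemMap h, elemMap_elemInv h⟩

end Elementary

section Perspectivity

variable {O : P} {l m : L} {hl : O ∉ l} {hm : O ∉ m}

theorem persp_mem {k : L} (hO : O ∈ k) {X : {X : P // X ∈ l}} (hX : (X : P) ∈ k) :
    (persp O l m hl hm X : P) ∈ k := by
  have : elemInv O l hl X = ⟨k, hO⟩ := elemInv_eq_of_mem hX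
  simpa only [persp, comp_apply, this] using elemMap_mem hm ⟨k, hO⟩

theorem persp_eq_of_mem {k : L} (hO : O ∈ k) {X : {X : P // X ∈ l}} {Y : {Y : P // Y ∈ m}}
    (hX : (X : P) ∈ k) (hY : (Y : P) ∈ k) : persp O l m hl hm X = Y := by
  have : elemInv O l hl X = ⟨k, hO⟩ := elemInv_eq_of_mem hX
  simpa only [persp, comp_apply, this] using elemMap_eq_of_mem (h := hm) (k := ⟨k, hO⟩) hY

theorem isRangePersp_persp : IsRangePersp P L l m (persp O l m hl hm) :=
  ⟨O, hl, hm, fun X => ⟨_, (elemInv O l hl X).2, mem_elemInv hl X, elemMap_mem hm _⟩⟩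

theorem persp_persp : LeftInverse (persp O m l hm hl) (persp O l m hl hm) :=
  fun X => persp_eq_of_mem (elemInv O l hl X).2 (elemMap_mem hm _) (mem_elemInv hl X)

theorem IsRangePersp.exists_eq_persp {f : {X : P // X ∈ l} → {Y : P // Y ∈ m}}
    (hf : IsRangePersp P L l m f) : ∃ (O : P) (hl : O ∉ l) (hm : O ∉ m), f = persp O l m hl hm := by
  obtain ⟨O, hl, hm, hf⟩ := hf
  refine ⟨O, hl, hm, funext fun X => ?_⟩
  obtain ⟨k, hO, hX, hfX⟩ := hf X
  exact (persp_eq_of_mem hO hX hfX).symm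

end Perspectivity

theorem IsProj.exists_inverse {a b : Obj P L} {f : a.Carrier → b.Carrier}
    (hf : IsProj P L a b f) :
    ∃ g : b.Carrier → a.Carrier, IsProj P L b a g ∧ LeftInverse g f ∧ RightInverse g f := by
  induction hf with
  | persp hf =>
    obtain ⟨O, hl, hm, rfl⟩ := hf.exists_eq_persp
    exact ⟨_, .persp isRangePersp_persp, persp_persp, persp_persp⟩
  | elem hf =>
    rw [hf.eq_elemMap]
    exact ⟨_, .elemInv (isElemInv_elemInv _), elemInv_elemMap _, elemMap_elemInv _⟩
  | elemInv hf =>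
    rw [hf.eq_elemInv]
    exact ⟨_, .elem (isElemMap_elemMap _), elemMap_elemInv _, elemInv_elemMap _⟩
  | comp _ _ ih₁ ih₂ =>
    obtain ⟨g₁, hg₁, hl₁, hr₁⟩ := ih₁
    obtain ⟨g₂, hg₂, hl₂, hr₂⟩ := ih₂
    exact ⟨g₁ ∘ g₂, hg₂.comp hg₁, hl₂.comp hl₁, hr₂.comp hr₁⟩

theorem IsProj.injective {a b : Obj P L} {f : a.Carrier → b.Carrier} (hf : IsProj P L a b f) :
    Injective f :=
  let ⟨_, _, hl, _⟩ := hf.exists_inverse; hl.injective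

theorem IsProj.surjective {a b : Obj P L} {f : a.Carrier → b.Carrier} (hf : IsProj P L a b f) :
    Surjective f :=
  let ⟨_, _, _, hr⟩ := hf.exists_inverse; hr.surjective

theorem IsProj.eq_of_eq_on_three (hT : AxiomT P L) {a b : Obj P L}
    {f g : a.Carrier → b.Carrier} (hf : IsProj P L a b f) (hg : IsProj P L a b g)
    {x y z : a.Carrier} (hxy : x ≠ y) (hxz : x ≠ z) (hyz : y ≠ z)
    (ex : f x = g x) (ey : f y = g y) (ez : f z = g z) : f = g := by
  obtain ⟨g', hg', hl, hr⟩ := hg.exists_inverse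
  have hid := hT a (g' ∘ f) (hf.comp hg')
    ⟨x, y, z, hxy, hxz, hyz, by simp [ex, hl x], by simp [ey, hl y], by simp [ez, hl z]⟩
  funext w
  rw [← hr (f w), ← comp_apply (f := g'), hid]

end Projectivities

section Parabolic

variable {P L} [ProjectivePlane P L]

theorem notMem_of_mem_two_transversals {s b c : L} {B C B' C' O : P} (hBC : B ≠ C) (hB : B ∈ s)
    (hC : C ∈ s) (hB' : B' ∉ s) (hC' : C' ∉ s) (hBb : B ∈ b) (hB'b : B' ∈ b) (hCc : C ∈ c)
    (hC'c : C' ∈ c) (hOb : O ∈ b) (hOc : O ∈ c) : O ∉ s := fun hO =>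
  hBC <| (point_eq_of_mem (ne_of_mem_of_not_mem' hB'b hB') hOb hO hBb hB).symm.trans
    (point_eq_of_mem (ne_of_mem_of_not_mem' hC'c hC') hOc hO hCc hC)

theorem exists_persp_eq_and_eq {s t : L} {B C : {X : P // X ∈ s}} {B' C' : {X : P // X ∈ t}}
    (hBC : B ≠ C) (hB'C' : B' ≠ C') (hB : (B : P) ∉ t) (hC : (C : P) ∉ t) (hB' : (B' : P) ∉ s)
    (hC' : (C' : P) ∉ s) :
    ∃ (O : P) (hOs : O ∉ s) (hOt : O ∉ t),
      persp O s t hOs hOt B = B' ∧ persp O s t hOs hOt C = C' := by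
  have hBC' : (B : P) ≠ C := fun h => hBC (Subtype.ext h)
  have hBB' : (B : P) ≠ B' := ne_of_mem_of_not_mem B.2 hB'
  have hCC' : (C : P) ≠ C' := ne_of_mem_of_not_mem C.2 hC'
  have hbc : (join hBB' : L) ≠ join hCC' := fun h =>
    hB' <| (line_eq_of_mem hBC' (mem_join_left hBB') (h ▸ mem_join_left hCC') B.2 C.2) ▸
      mem_join_right hBB'
  have hOs := notMem_of_mem_two_transversals hBC' B.2 C.2 hB' hC' (mem_join_left _)
    (mem_join_right _) (mem_join_left _) (mem_join_right _) (meet_mem_left hbc) (meet_mem_right hbc)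
  have hOt := notMem_of_mem_two_transversals (fun h => hB'C' (Subtype.ext h)) B'.2 C'.2 hB hC
    (mem_join_right _) (mem_join_left _) (mem_join_right _) (mem_join_left _)
    (meet_mem_left hbc) (meet_mem_right hbc)
  exact ⟨meet hbc, hOs, hOt,
    persp_eq_of_mem (meet_mem_left hbc) (mem_join_left hBB') (mem_join_right hBB'),
    persp_eq_of_mem (meet_mem_right hbc) (mem_join_left hCC') (mem_join_right hCC')⟩

theorem persp_meet {O : P} {s t : L} {E : P} (hEs : E ∈ s) (hEt : E ∈ t) (hOs : O ∉ s)
    (hOt : O ∉ t) : persp O s t hOs hOt ⟨E, hEs⟩ = ⟨E, hEt⟩ :=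
  have hOE : O ≠ E := (ne_of_mem_of_not_mem hEs hOs).symm
  persp_eq_of_mem (mem_join_left hOE) (mem_join_right hOE) (mem_join_right hOE)

theorem exists_eq_persp_of_map_meet (hT : AxiomT P L) (h3 : LinesHaveAtLeast P L 3) {s t : L}
    (hst : s ≠ t) {E : P} (hEs : E ∈ s) (hEt : E ∈ t) {g : {X : P // X ∈ s} → {X : P // X ∈ t}}
    (hg : IsProj P L (.range s) (.range t) g) (hgE : g ⟨E, hEs⟩ = ⟨E, hEt⟩) :
    ∃ (O : P) (hOs : O ∉ s) (hOt : O ∉ t), g = persp O s t hOs hOt := by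
  have off : ∀ {l m : L} (hlm : l ≠ m) {X : P}, E ∈ l → E ∈ m → X ∈ l → X ≠ E → X ∉ m :=
    fun hlm _ hEl hEm hXl hXE hXm => hXE (point_eq_of_mem hlm hXl hXm hEl hEm)
  have g_ne : ∀ X : {X : P // X ∈ s}, (X : P) ≠ E → (g X : P) ≠ E := fun X hXE h =>
    hXE (congrArg Subtype.val (hg.injective ((Subtype.ext h).trans hgE.symm)))
  obtain ⟨B, hBs, hBE, -⟩ := h3.exists_mem_ne_ne s E E
  obtain ⟨C, hCs, hCE, hCB⟩ := h3.exists_mem_ne_ne s E B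
  have hBC : (⟨B, hBs⟩ : {X : P // X ∈ s}) ≠ ⟨C, hCs⟩ := fun h => hCB (congrArg Subtype.val h).symm
  obtain ⟨O, hOs, hOt, hOB, hOC⟩ := exists_persp_eq_and_eq hBC (hg.injective.ne hBC)
    (off hst hEs hEt hBs hBE) (off hst hEs hEt hCs hCE)
    (off hst.symm hEt hEs (g _).2 (g_ne ⟨B, hBs⟩ hBE))
    (off hst.symm hEt hEs (g _).2 (g_ne ⟨C, hCs⟩ hCE))
  refine ⟨O, hOs, hOt, hg.eq_of_eq_on_three hT (.persp isRangePersp_persp)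
    (x := ⟨E, hEs⟩) (fun h => hBE (congrArg Subtype.val h).symm)
    (fun h => hCE (congrArg Subtype.val h).symm) hBC ?_ hOB.symm hOC.symm⟩
  rw [hgE, persp_meet]

theorem mem_join_of_persp_eq {O : P} {s t : L} {hOs : O ∉ s} {hOt : O ∉ t}
    {X : {X : P // X ∈ s}} {Y : {Y : P // Y ∈ t}} (hXY : (X : P) ≠ Y)
    (h : persp O s t hOs hOt X = Y) : O ∈ (join hXY : L) :=
  have hOX : O ≠ X := (ne_of_mem_of_not_mem X.2 hOs).symm
  have hY : (Y : P) ∈ (join hOX : L) := h ▸ persp_mem (mem_join_left _) (mem_join_right _)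
  line_eq_of_mem hXY (mem_join_right _) hY (mem_join_left _) (mem_join_right _) ▸
    mem_join_left hOX

theorem persp_persp_eq_self_of_mem {O O' : P} {s t k : L} {hOs : O ∉ s} {hOt : O ∉ t}
    {hO's : O' ∉ s} {hO't : O' ∉ t} {X : {X : P // X ∈ t}} (hO : O ∈ k) (hO' : O' ∈ k)
    (hX : (X : P) ∈ k) : persp O' s t hO's hO't (persp O t s hOt hOs X) = X :=
  persp_eq_of_mem hO' (persp_mem hO hX) hX

theorem exists_eq_persp_comp_persp (hT : AxiomT P L) (h3 : LinesHaveAtLeast P L 3) {s t : L}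
    (hst : s ≠ t) {a : {X : P // X ∈ t}} (has : (a : P) ∈ s) {O : P} (hOs : O ∉ s) (hOt : O ∉ t)
    {k : L} (hOk : O ∈ k) (hak : (a : P) ∈ k) {f : {X : P // X ∈ t} → {X : P // X ∈ t}}
    (hf : IsProj P L (.range t) (.range t) f) (hfix : fixedPoints f = {a}) :
    ∃ (O' : P) (hO's : O' ∉ s) (hO't : O' ∉ t), O' ∈ k ∧
      f = persp O' s t hO's hO't ∘ persp O t s hOt hOs := by
  have hfa : f a = a := (hfix.symm ▸ Set.mem_singleton a : a ∈ fixedPoints f)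
  obtain ⟨O', hO's, hO't, hO'⟩ := exists_eq_persp_of_map_meet hT h3 hst has a.2
    (g := f ∘ persp O s t hOs hOt) ((IsProj.persp isRangePersp_persp).comp hf)
    (by rw [comp_apply, persp_meet]; exact hfa)
  have hf_eq : f = persp O' s t hO's hO't ∘ persp O t s hOt hOs := by
    rw [← hO']
    funext X
    simp only [comp_apply, persp_persp X]
  refine ⟨O', hO's, hO't, ?_, hf_eq⟩
  by_cases hOO' : O = O'
  · exact hOO' ▸ hOk
  -- the point where `OO'` meets `t` is fixed by `f`, so it is `a`
  have hmt : (join hOO' : L) ≠ t := ne_of_mem_of_not_mem' (mem_join_left _) hOt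
  have hX : (⟨meet hmt, meet_mem_right hmt⟩ : {X : P // X ∈ t}) ∈ fixedPoints f := by
    rw [mem_fixedPoints, IsFixedPt, hf_eq]
    exact persp_persp_eq_self_of_mem (mem_join_left _) (mem_join_right _) (meet_mem_left hmt)
  rw [hfix, Set.mem_singleton_iff] at hX
  have hOa : O ≠ a := (ne_of_mem_of_not_mem a.2 hOt).symm
  rw [line_eq_of_mem hOa hOk hak (mem_join_left hOO') (hX ▸ meet_mem_left hmt)]
  exact mem_join_right hOO'

theorem range_proj_eq_of_fixedPoints (hT : AxiomT P L) (h3 : LinesHaveAtLeast P L 3) {t : L}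
    {f₁ f₂ : {X : P // X ∈ t} → {X : P // X ∈ t}} (h₁ : IsProj P L (.range t) (.range t) f₁)
    (h₂ : IsProj P L (.range t) (.range t) f₂) {a x : {X : P // X ∈ t}}
    (hf₁ : fixedPoints f₁ = {a}) (hf₂ : fixedPoints f₂ = {a}) (hxa : x ≠ a)
    (hx : f₁ x = f₂ x) : f₁ = f₂ := by
  obtain ⟨Z, hZt⟩ := Nondegenerate.exists_point (P := P) t
  have haZ : (a : P) ≠ Z := ne_of_mem_of_not_mem a.2 hZt
  have hst : (join haZ : L) ≠ t := ne_of_mem_of_not_mem' (mem_join_right haZ) hZt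
  obtain ⟨O, hOs, hOt⟩ := h3.exists_notMem_notMem (mem_join_left haZ) a.2
  have hOa : O ≠ a := (ne_of_mem_of_not_mem a.2 hOt).symm
  have hkt : (join hOa : L) ≠ t := ne_of_mem_of_not_mem' (mem_join_left hOa) hOt
  obtain ⟨O₁, hO₁s, hO₁t, hO₁k, rfl⟩ := exists_eq_persp_comp_persp hT h3 hst (mem_join_left haZ)
    hOs hOt (mem_join_left hOa) (mem_join_right hOa) h₁ hf₁
  obtain ⟨O₂, hO₂s, hO₂t, hO₂k, rfl⟩ := exists_eq_persp_comp_persp hT h3 hst (mem_join_left haZ)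
    hOs hOt (mem_join_left hOa) (mem_join_right hOa) h₂ hf₂
  set X' := persp O t (join haZ) hOt hOs x
  set y := persp O₁ (join haZ) t hO₁s hO₁t X'
  have hfa : (persp O₁ (join haZ) t hO₁s hO₁t ∘ persp O t (join haZ) hOt hOs) a = a :=
    (hf₁.symm ▸ Set.mem_singleton a : a ∈ fixedPoints _)
  have hya : (y : P) ≠ a := fun h => hxa (h₁.injective ((Subtype.ext h).trans hfa.symm))
  have hX'y : (X' : P) ≠ y := fun h =>
    hya (point_eq_of_mem hst (h ▸ X'.2) y.2 (mem_join_left haZ) a.2)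
  have hdk : (join hX'y : L) ≠ join hOa := fun h =>
    hya (point_eq_of_mem hkt (h ▸ mem_join_right hX'y) y.2 (mem_join_right hOa) a.2)
  obtain rfl : O₁ = O₂ := point_eq_of_mem hdk (mem_join_of_persp_eq hX'y rfl) hO₁k
    (mem_join_of_persp_eq hX'y hx.symm) hO₂k
  rfl

theorem fixedPoints_conj_eq_singleton {α β : Type*} (e : α ≃ β) {f : α → α} {a : α}
    (hf : fixedPoints f = {a}) : fixedPoints (e ∘ f ∘ e.symm) = {e a} := by
  ext y
  rw [mem_fixedPoints, IsFixedPt, comp_apply, comp_apply, ← e.eq_symm_apply, ← IsFixedPt,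
    ← mem_fixedPoints, hf, Set.mem_singleton_iff, Set.mem_singleton_iff, e.symm_apply_eq]

theorem pencil_proj_eq_of_fixedPoints (hT : AxiomT P L) (h3 : LinesHaveAtLeast P L 3) {U : P}
    {f₁ f₂ : {k : L // U ∈ k} → {k : L // U ∈ k}} (h₁ : IsProj P L (.pencil U) (.pencil U) f₁)
    (h₂ : IsProj P L (.pencil U) (.pencil U) f₂) {a x : {k : L // U ∈ k}}
    (hf₁ : fixedPoints f₁ = {a}) (hf₂ : fixedPoints f₂ = {a}) (hxa : x ≠ a)
    (hx : f₁ x = f₂ x) : f₁ = f₂ := by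
  obtain ⟨s, hUs⟩ := Nondegenerate.exists_line (L := L) U
  set e := elemEquiv hUs
  have conj_isProj : ∀ {f}, IsProj P L (.pencil U) (.pencil U) f →
      IsProj P L (.range s) (.range s) (e ∘ f ∘ e.symm) := fun hf =>
    ((IsProj.elemInv (isElemInv_elemInv hUs)).comp hf).comp (.elem (isElemMap_elemMap hUs))
  have := range_proj_eq_of_fixedPoints hT h3 (conj_isProj h₁) (conj_isProj h₂)
    (fixedPoints_conj_eq_singleton e hf₁) (fixedPoints_conj_eq_singleton e hf₂) (x := e x)
    (e.injective.ne hxa) (by simp [hx])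
  funext k
  simpa using congrFun this (e k)

end Parabolic

section Conic

variable {P L}

theorem conicSet_eq_of_inverse {U V : P} {π : {k : L // U ∈ k} → {k : L // V ∈ k}}
    {ρ : {k : L // V ∈ k} → {k : L // U ∈ k}}
    (hρπ : LeftInverse ρ π) (hπρ : RightInverse ρ π) : conicSet P L V U ρ = conicSet P L U V π := by
  ext X
  constructor
  · rintro ⟨m, hXm, hXρm⟩
    exact ⟨ρ m, hXρm, by rwa [hπρ m]⟩
  · rintro ⟨k, hXk, hXπk⟩
    exact ⟨π k, hXπk, by rwa [hρπ k]⟩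

variable [ProjectivePlane P L] {U V : P}

noncomputable def pencilPersp (g : L) (hV : V ∉ g) (hU : U ∉ g) :
    {k : L // V ∈ k} → {k : L // U ∈ k} :=
  elemInv U g hU ∘ elemMap V g hV

section PencilPersp

variable {g : L} (hV : V ∉ g) (hU : U ∉ g)

theorem isProj_pencilPersp : IsProj P L (.pencil V) (.pencil U) (pencilPersp g hV hU) :=
  (IsProj.elem (isElemMap_elemMap hV)).comp (.elemInv (isElemInv_elemInv hU))

variable {hV hU}

theorem pencilPersp_eq_of_mem {m : {k : L // V ∈ k}} {k : {k : L // U ∈ k}} {X : P} (hXg : X ∈ g)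
    (hXm : X ∈ (m : L)) (hXk : X ∈ (k : L)) : pencilPersp g hV hU m = k := by
  rw [pencilPersp, comp_apply, elemMap_eq_of_mem (X := ⟨X, hXg⟩) hXm, elemInv_eq_of_mem hXk]

theorem pencilPersp_join (hUV : U ≠ V) :
    pencilPersp g hV hU ⟨join hUV, mem_join_right hUV⟩ = ⟨join hUV, mem_join_left hUV⟩ :=
  have h : (join hUV : L) ≠ g := ne_of_mem_of_not_mem' (mem_join_left hUV) hU
  pencilPersp_eq_of_mem (meet_mem_right h) (meet_mem_left h) (meet_mem_left h)

end PencilPersp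

theorem pencilPersp_ne_pencilPersp {t l : L} (htl : t ≠ l) {Q : P} (hQt : Q ∈ t) (hQl : Q ∈ l)
    (hVt : V ∉ t) (hUt : U ∉ t) (hVl : V ∉ l) (hUl : U ∉ l) {m : {k : L // V ∈ k}}
    (hUm : U ∉ (m : L)) (hQm : Q ∉ (m : L)) :
    pencilPersp t hVt hUt m ≠ pencilPersp l hVl hUl m := by
  intro h
  set X := elemMap V t hVt m
  set Y := elemMap V l hVl m
  have hXY : (X : P) = Y := point_eq_of_mem (ne_of_mem_of_not_mem' (pencilPersp t hVt hUt m).2 hUm)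
    (mem_elemInv hUt X) (elemMap_mem hVt m) (h ▸ mem_elemInv hUl Y) (elemMap_mem hVl m)
  have hXQ : (X : P) = Q := point_eq_of_mem htl X.2 (hXY ▸ Y.2) hQt hQl
  exact hQm (hXQ ▸ elemMap_mem hVt m)

variable {π : {k : L // U ∈ k} → {k : L // V ∈ k}}

theorem fixedPoints_pencilPersp_comp {g : L} (hV : V ∉ g) (hU : U ∉ g) {Q : P}
    (hg : IsTangent P L (conicSet P L U V π) g Q) (hUQ : U ≠ Q) :
    fixedPoints (pencilPersp g hV hU ∘ π) = {⟨join hUQ, mem_join_left hUQ⟩} := by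
  obtain ⟨⟨k₀, hUk₀⟩, hQk₀, hQπ⟩ := hg.1
  obtain rfl : k₀ = join hUQ := line_eq_of_mem hUQ hUk₀ hQk₀ (mem_join_left _) (mem_join_right _)
  ext k
  rw [mem_fixedPoints, IsFixedPt, comp_apply, Set.mem_singleton_iff]
  constructor
  · intro hk
    set X := elemMap V g hV (π k)
    have hXQ : (X : P) = Q := hg.2.2 X ⟨k, hk ▸ mem_elemInv hU X, elemMap_mem hV _⟩ X.2
    exact Subtype.ext <| line_eq_of_mem hUQ k.2 (hXQ ▸ hk ▸ mem_elemInv hU X) (mem_join_left _)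
      (mem_join_right _)
  · rintro rfl
    exact pencilPersp_eq_of_mem hg.2.1 hQπ hQk₀

theorem IsTangent.map_eq_join_of_left (hnp : ∀ k, (π k : L) ≠ k) (hUV : U ≠ V) {g : L}
    (hg : IsTangent P L (conicSet P L U V π) g U) :
    π ⟨g, hg.2.1⟩ = ⟨join hUV, mem_join_right hUV⟩ := by
  have h := hnp ⟨g, hg.2.1⟩
  have hXU : meet h = U := hg.2.2 _ ⟨_, meet_mem_right h, meet_mem_left h⟩ (meet_mem_right h)
  have hUπ : U ∈ (π ⟨g, hg.2.1⟩ : L) := by simpa only [hXU] using meet_mem_left h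
  exact Subtype.ext <| line_eq_of_mem hUV hUπ (π _).2 (mem_join_left _) (mem_join_right _)

theorem IsTangent.eq_of_left (hπ : Injective π) (hnp : ∀ k, (π k : L) ≠ k) (hUV : U ≠ V)
    {t l : L} (ht : IsTangent P L (conicSet P L U V π) t U)
    (hl : IsTangent P L (conicSet P L U V π) l U) : t = l :=
  congrArg Subtype.val <| hπ <| (ht.map_eq_join_of_left hnp hUV).trans
    (hl.map_eq_join_of_left hnp hUV).symm

theorem IsTangent.eq_of_ne_of_ne (hT : AxiomT P L) (h3 : LinesHaveAtLeast P L 3)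
    (hUV : U ≠ V) (hπ : IsProj P L (.pencil U) (.pencil V) π) (hnp : ∀ k, (π k : L) ≠ k)
    {Q : P} {t l : L} (ht : IsTangent P L (conicSet P L U V π) t Q)
    (hl : IsTangent P L (conicSet P L U V π) l Q) (hQU : Q ≠ U) (hQV : Q ≠ V) : t = l := by
  by_contra htl
  obtain ⟨k₁, hk₁⟩ := hπ.surjective ⟨join hUV, mem_join_right hUV⟩
  have off : ∀ {g : L}, IsTangent P L (conicSet P L U V π) g Q → V ∉ g ∧ U ∉ g := fun hg =>
    ⟨fun h => hQV (hg.2.2 V ⟨⟨join hUV, mem_join_left hUV⟩, mem_join_right hUV, (π _).2⟩ h).symm,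
     fun h => hQU (hg.2.2 U ⟨k₁, k₁.2, hk₁ ▸ mem_join_left hUV⟩ h).symm⟩
  obtain ⟨hVt, hUt⟩ := off ht
  obtain ⟨hVl, hUl⟩ := off hl
  have hfix := fixedPoints_pencilPersp_comp hVt hUt ht hQU.symm
  have hk₁_ne : k₁ ≠ ⟨join hQU.symm, mem_join_left hQU.symm⟩ := by
    intro h
    have hk₁_fix : pencilPersp t hVt hUt (π k₁) = k₁ :=
      (hfix ▸ h : k₁ ∈ fixedPoints (pencilPersp t hVt hUt ∘ π))
    rw [hk₁, pencilPersp_join] at hk₁_fix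
    exact hnp k₁ ((congrArg Subtype.val hk₁).trans (congrArg Subtype.val hk₁_fix))
  have hψ := pencil_proj_eq_of_fixedPoints hT h3 (hπ.comp (isProj_pencilPersp hVt hUt))
    (hπ.comp (isProj_pencilPersp hVl hUl)) hfix (fixedPoints_pencilPersp_comp hVl hUl hl hQU.symm)
    hk₁_ne (by simp only [comp_apply, hk₁, pencilPersp_join])
  obtain ⟨m, hVm, hUm, hQm⟩ := h3.exists_line_notMem_notMem hUV.symm hQV.symm
  obtain ⟨k, hk⟩ := hπ.surjective ⟨m, hVm⟩
  have hψk := congrFun hψ k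
  rw [comp_apply, comp_apply, hk] at hψk
  exact pencilPersp_ne_pencilPersp htl ht.2.1 hl.2.1 hVt hUt hVl hUl hUm hQm hψk

theorem IsTangent.unique (hT : AxiomT P L) (h3 : LinesHaveAtLeast P L 3)
    {κ : Set P} (hκ : IsConic P L κ) {Q : P} {t l : L} (ht : IsTangent P L κ t Q)
    (hl : IsTangent P L κ l Q) : t = l := by
  obtain ⟨U, V, π, hUV, hπ, hnp, rfl⟩ := hκ
  obtain ⟨ρ, hρ, hρπ, hπρ⟩ := hπ.exists_inverse
  by_cases hQU : Q = U
  · subst hQU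
    exact ht.eq_of_left hπ.injective hnp hUV hl
  by_cases hQV : Q = V
  · subst hQV
    rw [← conicSet_eq_of_inverse hρπ hπρ] at ht hl
    exact ht.eq_of_left hρ.injective (fun m h => hnp (ρ m) (by rw [hπρ m]; exact h.symm))
      hUV.symm hl
  exact ht.eq_of_ne_of_ne hT h3 hUV hπ hnp hl hQU hQV

end Conic

theorem secant_lemma
    [Configuration.ProjectivePlane P L]
    (h6 : LinesHaveAtLeast P L 6) (hT : AxiomT P L)
    (κ : Set P) (hκ : IsConic P L κ)
    (Pt : P) (t : L) (ht : IsTangent P L κ t Pt)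
    (l : L) (hPl : Pt ∈ l) (hlt : l ≠ t) :
    (∃ R : P, R ∈ κ ∧ R ≠ Pt ∧ R ∈ l) ∧ IsSecant P L κ l := by
  obtain ⟨R, hRκ, hRl, hRPt⟩ : ∃ R ∈ κ, R ∈ l ∧ R ≠ Pt := by
    by_contra! h
    exact hlt (IsTangent.unique hT (h6.mono (by norm_num)) hκ ⟨ht.1, hPl, h⟩ ht)
  exact ⟨⟨R, hRκ, hRPt, hRl⟩, R, Pt, hRPt, hRκ, ht.1, hRl, hPl⟩
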